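/- Let 2 ≤ d ≤ d' and 1 ≤ p ≤ q be integers and let N < d·d'. If there exists an N-number USV1Bd in M_{d×d'} (equivalently, an N-number unextendible maximally entangled basis (UMEB) in ℂ^d ⊗ ℂ^{d'}), then there exists a (p·q·d·d' − p·(d·d' − N))-number USV1B(pd) in M_{pd×qd'} (equivalently, a (pqdd' − p(dd'−N))-number UMEB in ℂ^{pd} ⊗ ℂ^{qd'}). -/

import Mathlib

/-!
Let `W s t` (`s : ℤ/p`, `t : ℤ/q`) be the `p × q` Weyl matrix with entry `e^{2πi js/p}` at
`(j, j + t)`. These are coisometries, pairwise orthogonal, and complete: the pairings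
`⟨W s t, M⟩` are the discrete Fourier transform in `s` of the `t`-th shifted diagonal of `M`.
The new family is `W s 0 ⊗ A i` together with `W s t ⊗ W' a b` for `t ≠ 0`, `W'` the `d × d'`
Weyl basis. If `B` is orthogonal to all of them, Fourier inversion shows that the first block row
of `B` vanishes off its diagonal block `D`, and that `D` is orthogonal to every `A i`. Then
`B Bᴴ = 1` gives `D Dᴴ = 1`, contradicting the unextendibility of `A`.
-/

open Function Matrix Kronecker ZMod

section ShiftMatrix

variable {p : ℕ} [NeZero p] {β : Type*} [AddGroup β] [DecidableEq β] (ι : ZMod p → β)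

noncomputable def shiftMatrix (s : ZMod p) (t : β) : Matrix (ZMod p) β ℂ :=
  of fun j k => if k = ι j + t then stdAddChar (j * s) else 0

variable {ι} [Fintype β]

theorem shiftMatrix_mul_conjTranspose_self (hι : Injective ι) (s : ZMod p) (t : β) :
    shiftMatrix ι s t * (shiftMatrix ι s t)ᴴ = 1 := by
  ext j j'
  by_cases hj : j = j'
  · subst hj
    simp [shiftMatrix, mul_apply, ← AddChar.map_neg_eq_conj, ← AddChar.map_add_eq_mul]
  · simp [shiftMatrix, mul_apply, one_apply_ne hj, hι.ne hj]

theorem trace_conjTranspose_shiftMatrix_mul (s : ZMod p) (t : β) (M : Matrix (ZMod p) β ℂ) :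
    ((shiftMatrix ι s t)ᴴ * M).trace = 𝓕 (fun j => M j (ι j + t)) s := by
  rw [trace_mul_comm, trace, dft_apply]
  refine Finset.sum_congr rfl fun j _ => ?_
  simp [shiftMatrix, mul_apply, apply_ite (starRingEnd ℂ), mul_comm, AddChar.map_neg_eq_conj]

theorem trace_conjTranspose_shiftMatrix_mul_shiftMatrix (s s' : ZMod p) (t t' : β) :
    ((shiftMatrix ι s t)ᴴ * shiftMatrix ι s' t').trace =
      if s = s' ∧ t = t' then (p : ℂ) else 0 := by
  rw [trace_conjTranspose_shiftMatrix_mul, dft_apply]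
  by_cases ht : t = t'
  · subst ht
    have hsum := AddChar.sum_mulShift (s' - s) (isPrimitive_stdAddChar p)
    simp only [sub_eq_zero, eq_comm (a := s'), ZMod.card, Nat.cast_ite, Nat.cast_zero] at hsum
    simp only [shiftMatrix, of_apply, if_pos, smul_eq_mul, ← AddChar.map_add_eq_mul, and_true]
    rw [← hsum]
    exact Finset.sum_congr rfl fun j _ => congrArg _ (by ring)
  · simp [shiftMatrix, ht]

theorem shiftMatrix_apply_eq_zero_of_forall_trace {t : β} {M : Matrix (ZMod p) β ℂ}
    (h : ∀ s, ((shiftMatrix ι s t)ᴴ * M).trace = 0) (j : ZMod p) : M j (ι j + t) = 0 := by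
  have hF : 𝓕 (fun j => M j (ι j + t)) = 0 := funext fun s => by
    rw [← trace_conjTranspose_shiftMatrix_mul, h, Pi.zero_apply]
  exact congrFun ((LinearEquiv.map_eq_zero_iff _).1 hF) j

theorem eq_zero_of_forall_trace_shiftMatrix {M : Matrix (ZMod p) β ℂ}
    (h : ∀ s t, ((shiftMatrix ι s t)ᴴ * M).trace = 0) : M = 0 := by
  ext j k
  simpa using shiftMatrix_apply_eq_zero_of_forall_trace (fun s => h s (-ι j + k)) j

end ShiftMatrix

section Block

variable {α β m n : Type*} [Fintype β] [Fintype n]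

noncomputable def blockInner [Fintype m] (X : Matrix m n ℂ) (B : Matrix (α × m) (β × n) ℂ) :
    Matrix α β ℂ :=
  of fun j k => (Xᴴ * B.submatrix (Prod.mk j) (Prod.mk k)).trace

theorem trace_conjTranspose_kronecker_mul [Fintype α] [Fintype m] (V : Matrix α β ℂ)
    (X : Matrix m n ℂ) (B : Matrix (α × m) (β × n) ℂ) :
    ((V ⊗ₖ X)ᴴ * B).trace = (Vᴴ * blockInner X B).trace := by
  simp only [trace, diag, mul_apply, Fintype.sum_prod_type, blockInner, of_apply,
    conjTranspose_apply, kroneckerMap_apply, submatrix_apply, star_mul', Finset.mul_sum]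
  exact Finset.sum_congr rfl fun k _ => Finset.sum_comm.trans (Finset.sum_congr rfl
    fun b _ => Finset.sum_congr rfl fun j _ => Finset.sum_congr rfl fun a _ => by ring)

theorem trace_conjTranspose_kronecker_mul_kronecker [Fintype α] [Fintype m]
    (V V' : Matrix α β ℂ) (X X' : Matrix m n ℂ) :
    ((V ⊗ₖ X)ᴴ * (V' ⊗ₖ X')).trace = (Vᴴ * V').trace * (Xᴴ * X').trace := by
  rw [conjTranspose_kronecker, ← mul_kronecker_mul, trace_kronecker]

theorem kronecker_mul_conjTranspose_self [DecidableEq α] [DecidableEq m]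
    {V : Matrix α β ℂ} {X : Matrix m n ℂ} (hV : V * Vᴴ = 1) (hX : X * Xᴴ = 1) :
    (V ⊗ₖ X) * (V ⊗ₖ X)ᴴ = 1 := by
  rw [conjTranspose_kronecker, ← mul_kronecker_mul, hV, hX, one_kronecker_one]

theorem submatrix_mul_conjTranspose_self_of_block_eq_zero {R : Type*} [CommRing R] [StarRing R]
    (B : Matrix (α × m) (β × n) R) (j : α) (k₀ : β)
    (h : ∀ k ≠ k₀, B.submatrix (Prod.mk j) (Prod.mk k) = 0) :
    (B * Bᴴ).submatrix (Prod.mk j) (Prod.mk j) =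
      B.submatrix (Prod.mk j) (Prod.mk k₀) * (B.submatrix (Prod.mk j) (Prod.mk k₀))ᴴ := by
  ext a a'
  simp only [submatrix_apply, mul_apply, conjTranspose_apply, Fintype.sum_prod_type]
  refine Finset.sum_eq_single k₀ (fun k _ hk => Finset.sum_eq_zero fun b _ => ?_) (by simp)
  simp [show B (j, a) (k, b) = 0 from congrFun (congrFun (h k hk) a) b]

theorem trace_conjTranspose_reindex_mul_reindex {m' n' : Type*} [Fintype m] [Fintype m']
    [Fintype n'] (em : m ≃ m') (en : n ≃ n') (M N : Matrix m n ℂ) :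
    ((reindex em en M)ᴴ * reindex em en N).trace = (Mᴴ * N).trace := by
  rw [reindex_apply, reindex_apply, conjTranspose_submatrix, submatrix_mul_equiv]
  exact Equiv.sum_comp en.symm fun k => (Mᴴ * N) k k

end Block

theorem trace_conjTranspose_mul_submatrix_eq_zero {p : ℕ} [NeZero p] {β m n : Type*}
    [AddGroup β] [DecidableEq β] [Fintype β] [Fintype m] [Fintype n] {ι : ZMod p → β} {t : β}
    {X : Matrix m n ℂ} {B : Matrix (ZMod p × m) (β × n) ℂ}
    (h : ∀ s, ((shiftMatrix ι s t ⊗ₖ X)ᴴ * B).trace = 0) (j : ZMod p) :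
    (Xᴴ * B.submatrix (Prod.mk j) (Prod.mk (ι j + t))).trace = 0 :=
  shiftMatrix_apply_eq_zero_of_forall_trace (M := blockInner X B)
    (fun s => by rw [← trace_conjTranspose_kronecker_mul, h]) j

section UMEB

variable {ι ι' m n m' n' : Type*} [DecidableEq ι] [DecidableEq ι'] [Fintype m] [Fintype n]
  [DecidableEq m] [Fintype m'] [Fintype n'] [DecidableEq m']

/-- An unextendible family of coisometries in `M_{m×n}`: a USV1B with `k = card m`, i.e. a UMEB
under vectorization. -/
structure IsUMEB (A : ι → Matrix m n ℂ) : Prop where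
  mul_conjTranspose_self : ∀ i, A i * (A i)ᴴ = 1
  trace_conjTranspose_mul : ∀ i j,
    ((A i)ᴴ * A j).trace = if i = j then (Fintype.card m : ℂ) else 0
  unextendible : ∀ B : Matrix m n ℂ, (∀ i, ((A i)ᴴ * B).trace = 0) → B * Bᴴ ≠ 1

theorem IsUMEB.reindex {A : ι → Matrix m n ℂ} (hA : IsUMEB A) (eι : ι' ≃ ι) (em : m ≃ m')
    (en : n ≃ n') : IsUMEB fun i => Matrix.reindex em en (A (eι i)) where
  mul_conjTranspose_self i := by
    rw [conjTranspose_reindex, reindex_apply, reindex_apply, submatrix_mul_equiv,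
      hA.mul_conjTranspose_self, submatrix_one_equiv]
  trace_conjTranspose_mul i j := by
    rw [trace_conjTranspose_reindex_mul_reindex, hA.trace_conjTranspose_mul,
      Fintype.card_congr em]
    simp only [eι.apply_eq_iff_eq]
  unextendible B hB hBB := by
    refine hA.unextendible (Matrix.reindex em.symm en.symm B) (fun i => ?_) ?_
    · simpa [← trace_conjTranspose_reindex_mul_reindex em en] using hB (eι.symm i)
    · rw [conjTranspose_reindex, reindex_apply, reindex_apply, submatrix_mul_equiv, hBB,
        submatrix_one_equiv]

end UMEB

section Construction

variable {p q d d' : ℕ} [NeZero p] [NeZero q] [NeZero d] [NeZero d'] {ι : Type*}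

variable (p q) in
noncomputable def kroneckerExtension (A : ι → Matrix (ZMod d) (ZMod d') ℂ) :
    (ZMod p × ι) ⊕ (ZMod p × {t : ZMod q // t ≠ 0} × ZMod d × ZMod d') →
      Matrix (ZMod p × ZMod d) (ZMod q × ZMod d') ℂ
  | .inl (s, i) => shiftMatrix cast s 0 ⊗ₖ A i
  | .inr (s, t, a, b) => shiftMatrix cast s t ⊗ₖ shiftMatrix cast a b

variable {A : ι → Matrix (ZMod d) (ZMod d') ℂ}

theorem kroneckerExtension_mul_conjTranspose_self (hA : ∀ i, A i * (A i)ᴴ = 1) (hpq : p ≤ q)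
    (hdd : d ≤ d') (x) : kroneckerExtension p q A x * (kroneckerExtension p q A x)ᴴ = 1 := by
  rcases x with ⟨s, i⟩ | ⟨s, t, a, b⟩
  · exact kronecker_mul_conjTranspose_self
      (shiftMatrix_mul_conjTranspose_self (cast_injective_of_le hpq) _ _) (hA i)
  · exact kronecker_mul_conjTranspose_self
      (shiftMatrix_mul_conjTranspose_self (cast_injective_of_le hpq) _ _)
      (shiftMatrix_mul_conjTranspose_self (cast_injective_of_le hdd) _ _)

theorem trace_conjTranspose_kroneckerExtension_mul [DecidableEq ι] (hA : ∀ i j,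
      ((A i)ᴴ * A j).trace = if i = j then (Fintype.card (ZMod d) : ℂ) else 0) (x y) :
    ((kroneckerExtension p q A x)ᴴ * kroneckerExtension p q A y).trace =
      if x = y then (Fintype.card (ZMod p × ZMod d) : ℂ) else 0 := by
  rcases x with ⟨s, i⟩ | ⟨s, t, a, b⟩ <;> rcases y with ⟨s', i'⟩ | ⟨s', t', a', b'⟩ <;>
    simp only [kroneckerExtension, trace_conjTranspose_kronecker_mul_kronecker,
      trace_conjTranspose_shiftMatrix_mul_shiftMatrix, hA]
  · simp [Prod.ext_iff, ← ite_and, and_comm]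
  · simp [Ne.symm t'.2]
  · simp [t.2]
  · simp [Prod.ext_iff, Subtype.ext_iff, ← ite_and, and_comm, and_assoc]

theorem kroneckerExtension_unextendible
    (hA : ∀ B, (∀ i, ((A i)ᴴ * B).trace = 0) → B * Bᴴ ≠ 1)
    (B : Matrix (ZMod p × ZMod d) (ZMod q × ZMod d') ℂ)
    (hB : ∀ x, ((kroneckerExtension p q A x)ᴴ * B).trace = 0) : B * Bᴴ ≠ 1 := by
  have off_diag (k : ZMod q) (hk : k ≠ 0) : B.submatrix (Prod.mk 0) (Prod.mk k) = 0 := by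
    refine eq_zero_of_forall_trace_shiftMatrix (ι := cast) fun a b => ?_
    simpa using trace_conjTranspose_mul_submatrix_eq_zero
      (fun s => hB (.inr (s, ⟨k, hk⟩, a, b))) 0
  have diag_perp (i : ι) : ((A i)ᴴ * B.submatrix (Prod.mk 0) (Prod.mk 0)).trace = 0 := by
    simpa using trace_conjTranspose_mul_submatrix_eq_zero (fun s => hB (.inl (s, i))) 0
  intro hBB
  refine hA _ diag_perp ?_
  rw [← submatrix_mul_conjTranspose_self_of_block_eq_zero B 0 0 off_diag, hBB,
    submatrix_one _ (Prod.mk_right_injective _)]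

theorem isUMEB_kroneckerExtension [DecidableEq ι] (hA : IsUMEB A) (hpq : p ≤ q) (hdd : d ≤ d') :
    IsUMEB (kroneckerExtension p q A) where
  mul_conjTranspose_self := kroneckerExtension_mul_conjTranspose_self hA.1 hpq hdd
  trace_conjTranspose_mul := trace_conjTranspose_kroneckerExtension_mul hA.2
  unextendible := kroneckerExtension_unextendible hA.3

theorem card_kroneckerExtension_index (N : ℕ) (hq : 1 ≤ q) (hN : N ≤ d * d') :
    Fintype.card ((ZMod p × Fin N) ⊕ (ZMod p × {t : ZMod q // t ≠ 0} × ZMod d × ZMod d')) =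
      p * q * d * d' - p * (d * d' - N) := by
  have hle : p * (d * d' - N) ≤ p * q * d * d' :=
    calc p * (d * d' - N) ≤ p * 1 * d * d' := by
          rw [mul_one, mul_assoc]; exact Nat.mul_le_mul_left _ (Nat.sub_le _ _)
      _ ≤ p * q * d * d' := by gcongr
  simp only [Fintype.card_sum, Fintype.card_prod, ZMod.card, Fintype.card_fin,
    Fintype.card_subtype_compl, Fintype.card_unique]
  zify [hle, hq, hN]
  ring

end Construction

theorem umeb_recursive (d d' p q N : ℕ)
    (hdd : d ≤ d') (hp : 1 ≤ p) (hpq : p ≤ q) (hN : N < d * d')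
    (h : ∃ A : Fin N → Matrix (Fin d) (Fin d') ℂ,
      (∀ i, A i * (A i)ᴴ = 1) ∧
      (∀ i j, ((A i)ᴴ * A j).trace = if i = j then (d : ℂ) else 0) ∧
      (∀ B : Matrix (Fin d) (Fin d') ℂ,
        (∀ i, ((A i)ᴴ * B).trace = 0) → ¬ (B * Bᴴ = 1))) :
    ∃ C : Fin (p * q * d * d' - p * (d * d' - N)) →
        Matrix (Fin (p * d)) (Fin (q * d')) ℂ,
      (∀ x, C x * (C x)ᴴ = 1) ∧
      (∀ x y, ((C x)ᴴ * C y).trace = if x = y then ((p * d : ℕ) : ℂ) else 0) ∧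
      (∀ B : Matrix (Fin (p * d)) (Fin (q * d')) ℂ,
        (∀ x, ((C x)ᴴ * B).trace = 0) → ¬ (B * Bᴴ = 1)) := by
  obtain ⟨A, hA₁, hA₂, hA₃⟩ := h
  have : NeZero d := ⟨by rintro rfl; simp at hN⟩
  have : NeZero d' := ⟨by rintro rfl; simp at hN⟩
  have : NeZero p := ⟨by omega⟩
  have : NeZero q := ⟨by omega⟩
  have hA : IsUMEB A := ⟨hA₁, by simpa using hA₂, hA₃⟩
  have hC := (isUMEB_kroneckerExtension (p := p) (q := q)
    (hA.reindex (.refl _) (finEquiv d).toEquiv (finEquiv d').toEquiv) hpq hdd).reindex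
    (Fintype.equivFinOfCardEq (card_kroneckerExtension_index N (hp.trans hpq) hN.le)).symm
    (Fintype.equivFinOfCardEq (n := p * d) (by simp))
    (Fintype.equivFinOfCardEq (n := q * d') (by simp))
  exact ⟨_, hC.1, by simpa using hC.2, hC.3⟩
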